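/- In atomic System F, the formula A = ∀X∀Y.X⊃Y is not derivable, and moreover for every propositional variable Z, the formula A⊃Z is not derivable. -/
import Mathlib


/-!
Statement 0: every universal polynomial formula enjoys the instantiation
overflow property in atomic System F (NI²_at).
-/

/-- Formulas of second-order propositional logic: variables, ⊃, ∀. -/
inductive Fm : Type
  | var : ℕ → Fm
  | imp : Fm → Fm → Fm
  | all : ℕ → Fm → Fm
deriving DecidableEq

namespace Fm

/-- `Free X A`: the variable `X` occurs free in `A`. -/
def Free (X : ℕ) : Fm → Prop
  | var Y => X = Y
  | imp A B => Free X A ∨ Free X B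
  | all Y A => X ≠ Y ∧ Free X A

/-- Substitution of `C` for the free occurrences of `X`. -/
def subst (X : ℕ) (C : Fm) : Fm → Fm
  | var Y => if X = Y then C else var Y
  | imp A B => imp (subst X C A) (subst X C B)
  | all Y A => if X = Y then all Y A else all Y (subst X C A)

/-- `C` is substitutable (free) for `X` in the given formula (no capture). -/
def FreeFor (C : Fm) (X : ℕ) : Fm → Prop
  | var _ => True
  | imp A B => FreeFor C X A ∧ FreeFor C X B
  | all Y A => (¬ Free X (all Y A)) ∨ (¬ Free Y C ∧ FreeFor C X A)

end Fm

/-- Natural deduction for second-order propositional logic.  When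
`atomic = true` the witness of ∀-elimination must be a variable
(this is the system `NI²_at`, atomic System F). -/
inductive Deriv (atomic : Bool) : Set Fm → Fm → Prop
  | ax {Γ A} : A ∈ Γ → Deriv atomic Γ A
  | impI {Γ A B} : Deriv atomic (insert A Γ) B → Deriv atomic Γ (.imp A B)
  | impE {Γ A B} : Deriv atomic Γ (.imp A B) → Deriv atomic Γ A → Deriv atomic Γ B
  | allI {Γ X A} : Deriv atomic Γ A → (∀ B ∈ Γ, ¬ Fm.Free X B) →
      Deriv atomic Γ (.all X A)
  | allE {Γ X A C} : Deriv atomic Γ (.all X A) → Fm.FreeFor C X A →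
      (atomic = true → ∃ Y, C = Fm.var Y) →
      Deriv atomic Γ (Fm.subst X C A)

/-- The formula `A = ∀X∀Y. X ⊃ Y` (with `X = 0`, `Y = 1`). -/
def A0 : Fm := .all 0 (.all 1 (.imp (.var 0) (.var 1)))



namespace Fm

/-- Evaluation where quantifiers range over a fixed set `D` of propositions. -/
def eval (D : Set Prop) (v : ℕ → Prop) : Fm → Prop
  | var n => v n
  | imp A B => eval D v A → eval D v B
  | all X A => ∀ p ∈ D, eval D (Function.update v X p) A

theorem eval_congr {D : Set Prop} {A : Fm} :
    ∀ {v w : ℕ → Prop}, (∀ Y, Free Y A → v Y = w Y) → (eval D v A ↔ eval D w A) := by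
  induction A with
  | var n => intro v w h; exact iff_of_eq (h n rfl)
  | imp A B ihA ihB =>
      intro v w h
      exact imp_congr (ihA fun Y hY => h Y (Or.inl hY)) (ihB fun Y hY => h Y (Or.inr hY))
  | all X A ih =>
      intro v w h
      refine forall_congr' fun p => forall_congr' fun hp => ih fun Y hY => ?_
      by_cases hYX : Y = X
      · subst hYX; simp
      · simp only [Function.update_of_ne hYX]
        exact h Y ⟨hYX, hY⟩

theorem subst_notFree {X : ℕ} {C : Fm} : ∀ {A : Fm}, ¬ Free X A → subst X C A = A := by
  intro A
  induction A with
  | var n =>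
      intro h
      simp only [subst]
      rw [if_neg]
      exact fun hx => h hx
  | imp A B ihA ihB =>
      intro h
      simp only [Free] at h
      push_neg at h
      simp [subst, ihA h.1, ihB h.2]
  | all Y A ih =>
      intro h
      simp only [Free] at h
      push_neg at h
      by_cases hXY : X = Y
      · simp [subst, hXY]
      · simp [subst, hXY, ih (h hXY)]

theorem eval_subst_var {D : Set Prop} {X Y : ℕ} :
    ∀ {A : Fm} {v : ℕ → Prop}, FreeFor (var Y) X A →
      (eval D v (subst X (var Y) A) ↔ eval D (Function.update v X (v Y)) A) := by
  intro A
  induction A with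
  | var n =>
      intro v _
      by_cases h : X = n
      · subst h; simp [subst, eval]
      · simp [subst, h, eval, Function.update_of_ne (Ne.symm h)]
  | imp A B ihA ihB =>
      intro v hf
      exact imp_congr (ihA hf.1) (ihB hf.2)
  | all Z A ih =>
      intro v hf
      by_cases hXZ : X = Z
      · subst hXZ
        simp only [subst, if_pos rfl]
        refine forall_congr' fun p => forall_congr' fun hp => ?_
        rw [Function.update_idem]
      · simp only [subst, if_neg hXZ]
        rcases hf with h | ⟨hYZ, hff⟩
        · -- X not free in all Z A, hence not free in A
          simp only [Free] at h
          push_neg at h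
          have hA : ¬ Free X A := h hXZ
          rw [subst_notFree hA]
          refine forall_congr' fun p => forall_congr' fun hp => eval_congr fun W hW => ?_
          have hWX : W ≠ X := fun e => hA (e ▸ hW)
          by_cases hWZ : W = Z
          · subst hWZ; simp
          · simp [Function.update_of_ne hWZ, Function.update_of_ne hWX]
        · have hYZ' : Y ≠ Z := fun e => hYZ (by simp [Free, e])
          refine forall_congr' fun p => forall_congr' fun hp => ?_
          rw [ih hff]
          refine eval_congr fun W hW => ?_
          have : (Function.update v Z p) Y = v Y := Function.update_of_ne hYZ' _ _
          rw [this, Function.update_comm hXZ]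

theorem sound {Γ : Set Fm} {A : Fm} (h : Deriv true Γ A) (D : Set Prop) :
    ∀ v : ℕ → Prop, (∀ n, v n ∈ D) → (∀ B ∈ Γ, eval D v B) → eval D v A := by
  induction h with
  | ax hA => intro v _ hΓ; exact hΓ _ hA
  | impI _ ih =>
      intro v hv hΓ ha
      exact ih v hv (fun B hB => by rcases hB with rfl | hB; exact ha; exact hΓ B hB)
  | impE _ _ ih1 ih2 =>
      intro v hv hΓ
      exact ih1 v hv hΓ (ih2 v hv hΓ)
  | @allI Γ' X A' _ hfree ih =>
      intro v hv hΓ p hp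
      refine ih (Function.update v X p) (fun n => ?_) (fun B hB => ?_)
      · by_cases hn : n = X
        · subst hn; simpa using hp
        · simpa [Function.update_of_ne hn] using hv n
      · exact (eval_congr (fun Y hY =>
          (Function.update_of_ne (fun e : Y = X => hfree B hB (e ▸ hY)) _ _).symm)).mp (hΓ B hB)
  | allE _ hff hat ih =>
      intro v hv hΓ
      obtain ⟨Y, rfl⟩ := hat rfl
      rw [eval_subst_var hff]
      exact ih v hv hΓ (v Y) (hv Y)

end Fm


/-- In atomic System F, `∀X∀Y.X⊃Y` is underivable, and so is `(∀X∀Y.X⊃Y) ⊃ Z`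
for every propositional variable `Z`. -/
theorem not_deriv_A0_and_not_deriv_A0_imp_var :
    ¬ Deriv true (∅ : Set Fm) A0 ∧
      ∀ Z : ℕ, ¬ Deriv true (∅ : Set Fm) (.imp A0 (.var Z)) := by
  constructor
  · intro h
    have := Fm.sound h Set.univ (fun n => n = 0) (fun n => trivial) (by simp)
    simp only [A0, Fm.eval] at this
    have := this True trivial False trivial
    simp at this
  · intro Z h
    have := Fm.sound h {False} (fun _ => False) (fun n => rfl) (by simp)
    simp only [A0, Fm.eval] at this
    refine this (fun p hp q hq => ?_)
    rcases Set.mem_singleton_iff.mp hp with rfl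
    rcases Set.mem_singleton_iff.mp hq with rfl
    simp [Function.update]
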